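/- Let Y be a linear subspace of the complex space ℓ₁ⁿ that has a basis over ℂ consisting of vectors with all coordinates real, and let x ∈ ℝⁿ \ Y be a vector with all coordinates real. If y₀ ∈ Y is the unique best approximation in Y for x, then y₀ has all coordinates real and y₀ is a 1-strongly unique best approximation for x in Y: there exists r > 0 such that ‖x − y‖₁ ≥ ‖x − y₀‖₁ + r‖y − y₀‖₁ for all y ∈ Y. -/

import Mathlib

/-!
Since `Y` is spanned by real vectors it is closed under coordinatewise conjugation, and
conjugating `y₀` does not change its distance to the real vector `x`, so uniqueness forces `y₀`
to be real. The residual `a = x - y₀` is then real, and `‖a - w‖₁ ≥ ‖a‖₁ + φ w` where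
`φ w = ∑_{a_j = 0} |w_j| - ∑_{a_j ≠ 0} sign(a_j) Re w_j` is the one-sided derivative of
`t ↦ ‖a - t w‖₁` at `0⁺`, with equality for small real `w`. Uniqueness therefore makes `φ`
positive on the nonzero real vectors of `Y`, hence on all of `Y \ {0}`: either `Re w ≠ 0` and
`φ w ≥ φ (Re w)`, or `w = i v` with `v` real and `2 φ w = φ v + φ (-v)`. Being continuous and
positively homogeneous, `φ` is then bounded below by `r ‖·‖₁` on `Y` for some `r > 0`, by
compactness of the unit sphere.
-/

open Filter Topology

theorem Submodule.star_mem_of_basis_im_eq_zero {ι κ : Type*} {Y : Submodule ℂ (ι → ℂ)}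
    (b : Module.Basis κ ℂ Y) (hb : ∀ i j, ((b i : ι → ℂ) j).im = 0) {z : ι → ℂ} (hz : z ∈ Y) :
    star z ∈ Y := by
  suffices ∀ w : Y, star (w : ι → ℂ) ∈ Y from this ⟨z, hz⟩
  intro w
  have hspan : w ∈ Submodule.span ℂ (Set.range b) := b.span_eq ▸ Submodule.mem_top
  induction hspan using Submodule.span_induction with
  | mem w hw =>
    obtain ⟨i, rfl⟩ := hw
    convert (b i).2 using 1
    exact funext fun j => Complex.conj_eq_iff_im.2 (hb i j)
  | zero => simp
  | add v w _ _ hv hw => simpa using Y.add_mem hv hw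
  | smul c w _ hw => simpa using Y.smul_mem (star c) hw

theorem re_mem_of_star_mem {ι : Type*} {Y : Submodule ℂ (ι → ℂ)} (hY : ∀ z ∈ Y, star z ∈ Y)
    {z : ι → ℂ} (hz : z ∈ Y) : (fun j => ((z j).re : ℂ)) ∈ Y := by
  convert Y.smul_mem (2⁻¹ : ℂ) (Y.add_mem hz (hY z hz)) using 1
  ext j
  simp [Complex.re_eq_add_conj, div_eq_inv_mul]

theorem im_mem_of_star_mem {ι : Type*} {Y : Submodule ℂ (ι → ℂ)} (hY : ∀ z ∈ Y, star z ∈ Y)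
    {z : ι → ℂ} (hz : z ∈ Y) : (fun j => ((z j).im : ℂ)) ∈ Y := by
  convert Y.smul_mem (2 * Complex.I)⁻¹ (Y.sub_mem hz (hY z hz)) using 1
  ext j
  simp [Complex.im_eq_sub_conj, div_eq_inv_mul]

theorem exists_pos_mul_norm_le_of_isClosed_cone {E : Type*} [NormedAddCommGroup E]
    [NormedSpace ℝ E] [ProperSpace E] {S : Set E} (hS : IsClosed S)
    (hcone : ∀ c : ℝ, 0 ≤ c → ∀ z ∈ S, c • z ∈ S) {φ : E → ℝ} (hφ : Continuous φ)
    (hhom : ∀ c : ℝ, 0 ≤ c → ∀ z, φ (c • z) = c * φ z) (hpos : ∀ z ∈ S, z ≠ 0 → 0 < φ z) :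
    ∃ r > 0, ∀ z ∈ S, r * ‖z‖ ≤ φ z := by
  have hK : IsCompact (S ∩ Metric.sphere 0 1) := (isCompact_sphere 0 1).inter_left hS
  obtain ⟨r, hr, hrK⟩ := hK.exists_forall_le' hφ.continuousOn fun u hu =>
    hpos u hu.1 (ne_zero_of_mem_unit_sphere ⟨u, hu.2⟩)
  refine ⟨r, hr, fun z hz => ?_⟩
  rcases eq_or_ne z 0 with rfl | hz0
  · simpa using (hhom 0 le_rfl 0).ge
  have hnorm : 0 < ‖z‖ := norm_pos_iff.2 hz0
  have := hrK (‖z‖⁻¹ • z) ⟨hcone _ (inv_nonneg.2 hnorm.le) z hz, by simp [norm_smul, hnorm.ne']⟩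
  rw [hhom _ (inv_nonneg.2 hnorm.le)] at this
  rwa [← div_eq_inv_mul, le_div_iff₀ hnorm] at this

/-- The one-sided derivative of `t ↦ ‖a - t c‖` at `t = 0⁺`. -/
noncomputable def normSubDeriv (a : ℝ) (c : ℂ) : ℝ :=
  if a = 0 then ‖c‖ else -(Real.sign a * c.re)

theorem abs_add_normSubDeriv_le (a : ℝ) (c : ℂ) : |a| + normSubDeriv a c ≤ ‖(a : ℂ) - c‖ := by
  have hre := Complex.abs_re_le_norm ((a : ℂ) - c)
  rw [Complex.sub_re, Complex.ofReal_re, abs_le] at hre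
  rcases lt_trichotomy a 0 with ha | rfl | ha
  · rw [normSubDeriv, if_neg ha.ne, Real.sign_of_neg ha, abs_of_neg ha]; linarith
  · simp [normSubDeriv]
  · rw [normSubDeriv, if_neg ha.ne', Real.sign_of_pos ha, abs_of_pos ha]; linarith

theorem norm_sub_eq_abs_add_normSubDeriv (a : ℝ) {c : ℂ} (hc : c.im = 0)
    (hca : a ≠ 0 → ‖c‖ ≤ |a|) : ‖(a : ℂ) - c‖ = |a| + normSubDeriv a c := by
  obtain ⟨t, rfl⟩ : ∃ t : ℝ, (t : ℂ) = c := ⟨c.re, Complex.ext (by simp) (by simp [hc])⟩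
  rw [← Complex.ofReal_sub, Complex.norm_real, Real.norm_eq_abs]
  simp only [Complex.norm_real, Real.norm_eq_abs] at hca
  rcases lt_trichotomy a 0 with ha | rfl | ha
  · have ht := (abs_le.1 (hca ha.ne)).1
    rw [abs_of_neg ha] at ht ⊢
    rw [normSubDeriv, if_neg ha.ne, Real.sign_of_neg ha, Complex.ofReal_re,
      abs_of_nonpos (by linarith)]
    ring
  · simp [normSubDeriv]
  · have ht := (abs_le.1 (hca ha.ne')).2
    rw [abs_of_pos ha] at ht ⊢
    rw [normSubDeriv, if_neg ha.ne', Real.sign_of_pos ha, Complex.ofReal_re,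
      abs_of_nonneg (by linarith)]
    ring

theorem normSubDeriv_smul (a : ℝ) {t : ℝ} (ht : 0 ≤ t) (c : ℂ) :
    normSubDeriv a (t • c) = t * normSubDeriv a c := by
  unfold normSubDeriv
  split_ifs
  · rw [norm_smul, Real.norm_of_nonneg ht]
  · simp only [Complex.smul_re, smul_eq_mul]; ring

theorem continuous_normSubDeriv (a : ℝ) : Continuous (normSubDeriv a) := by
  unfold normSubDeriv
  split_ifs
  · exact continuous_norm
  · fun_prop

theorem normSubDeriv_re_le (a : ℝ) (c : ℂ) : normSubDeriv a c.re ≤ normSubDeriv a c := by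
  unfold normSubDeriv
  split_ifs
  · simpa using Complex.abs_re_le_norm c
  · simp

theorem two_mul_normSubDeriv_of_re_eq_zero (a : ℝ) {c : ℂ} (hc : c.re = 0) :
    2 * normSubDeriv a c = normSubDeriv a c.im + normSubDeriv a (-c.im : ℝ) := by
  unfold normSubDeriv
  split_ifs
  · have : ‖c‖ = |c.im| := by
      rw [← Complex.re_add_im c, hc]; simp
    rw [this, Complex.norm_real, Complex.norm_real, Real.norm_eq_abs, Real.norm_eq_abs, abs_neg]
    ring
  · simp [hc]

variable {ι : Type*} [Fintype ι]

theorem star_eq_self_of_unique_best {Y : Submodule ℂ (ι → ℂ)} (hY : ∀ z ∈ Y, star z ∈ Y)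
    {x y₀ : ι → ℂ} (hx : star x = x) (hy₀ : y₀ ∈ Y)
    (huniq : ∀ y ∈ Y, y ≠ y₀ → ∑ j, ‖(x - y₀) j‖ < ∑ j, ‖(x - y) j‖) : star y₀ = y₀ := by
  by_contra hne
  refine (huniq _ (hY y₀ hy₀) hne).ne ?_
  rw [show x - star y₀ = star (x - y₀) by rw [star_sub, hx]]
  simp only [Pi.star_apply, norm_star]

noncomputable def l1NormSubDeriv (a : ι → ℝ) (z : ι → ℂ) : ℝ :=
  ∑ j, normSubDeriv (a j) (z j)

variable (a : ι → ℝ)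

theorem sum_abs_add_l1NormSubDeriv_le (z : ι → ℂ) :
    ∑ j, |a j| + l1NormSubDeriv a z ≤ ∑ j, ‖(a j : ℂ) - z j‖ := by
  rw [l1NormSubDeriv, ← Finset.sum_add_distrib]
  exact Finset.sum_le_sum fun j _ => abs_add_normSubDeriv_le (a j) (z j)

theorem sum_norm_sub_eq_sum_abs_add_l1NormSubDeriv {w : ι → ℂ} (hw : ∀ j, (w j).im = 0)
    (hwa : ∀ j, a j ≠ 0 → ‖w j‖ ≤ |a j|) :
    ∑ j, ‖(a j : ℂ) - w j‖ = ∑ j, |a j| + l1NormSubDeriv a w := by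
  rw [l1NormSubDeriv, ← Finset.sum_add_distrib]
  exact Finset.sum_congr rfl fun j _ => norm_sub_eq_abs_add_normSubDeriv (a j) (hw j) (hwa j)

theorem l1NormSubDeriv_smul {t : ℝ} (ht : 0 ≤ t) (z : ι → ℂ) :
    l1NormSubDeriv a (t • z) = t * l1NormSubDeriv a z := by
  simp only [l1NormSubDeriv, Pi.smul_apply, normSubDeriv_smul _ ht, Finset.mul_sum]

theorem continuous_l1NormSubDeriv : Continuous (l1NormSubDeriv a) :=
  continuous_finsetSum _ fun j _ => (continuous_normSubDeriv (a j)).comp (continuous_apply j)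

theorem l1NormSubDeriv_pos_of_im_eq_zero {w : ι → ℂ} (hw : ∀ j, (w j).im = 0)
    (hmin : ∀ t : ℝ, 0 < t → ∑ j, |a j| < ∑ j, ‖(a j : ℂ) - (t • w) j‖) :
    0 < l1NormSubDeriv a w := by
  have hsmall : ∀ᶠ t in 𝓝[>] (0 : ℝ), ∀ j, a j ≠ 0 → ‖(t • w) j‖ ≤ |a j| := by
    refine eventually_all.2 fun j => ?_
    by_cases ha : a j = 0
    · exact .of_forall fun _ h => absurd ha h
    have hlim : Tendsto (fun t : ℝ => ‖(t • w) j‖) (𝓝 0) (𝓝 0) := by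
      have hcont : Continuous fun t : ℝ => ‖(t • w) j‖ := by fun_prop
      simpa using hcont.tendsto 0
    exact ((hlim.eventually (ge_mem_nhds (abs_pos.2 ha))).filter_mono nhdsWithin_le_nhds).mono
      fun _ h _ => h
  obtain ⟨t, hta, ht⟩ := (hsmall.and self_mem_nhdsWithin).exists
  have := hmin t ht
  rw [sum_norm_sub_eq_sum_abs_add_l1NormSubDeriv a (fun j => by simp [hw j]) hta,
    l1NormSubDeriv_smul a ht.le] at this
  exact pos_of_mul_pos_right (by linarith) ht.le

theorem l1NormSubDeriv_pos {Y : Submodule ℂ (ι → ℂ)} (hY : ∀ z ∈ Y, star z ∈ Y)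
    (hmin : ∀ w ∈ Y, w ≠ 0 → ∑ j, |a j| < ∑ j, ‖(a j : ℂ) - w j‖)
    {z : ι → ℂ} (hz : z ∈ Y) (hz0 : z ≠ 0) : 0 < l1NormSubDeriv a z := by
  have hreal : ∀ w ∈ Y, (∀ j, (w j).im = 0) → w ≠ 0 → 0 < l1NormSubDeriv a w :=
    fun w hw hwim hw0 => l1NormSubDeriv_pos_of_im_eq_zero a hwim fun t ht =>
      hmin _ (Y.smul_of_tower_mem t hw) (smul_ne_zero ht.ne' hw0)
  set u : ι → ℂ := fun j => ((z j).re : ℂ)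
  set v : ι → ℂ := fun j => ((z j).im : ℂ)
  by_cases hu : u = 0
  · have hre : ∀ j, (z j).re = 0 := fun j => by simpa [u] using congrFun hu j
    have hv : v ≠ 0 := fun hv => hz0 <| funext fun j =>
      Complex.ext (hre j) (by simpa [v] using congrFun hv j)
    have hvY := im_mem_of_star_mem hY hz
    have h2 : 2 * l1NormSubDeriv a z = l1NormSubDeriv a v + l1NormSubDeriv a (-v) := by
      simp only [l1NormSubDeriv, Finset.mul_sum, ← Finset.sum_add_distrib]
      exact Finset.sum_congr rfl fun j _ => by
        simpa [v] using two_mul_normSubDeriv_of_re_eq_zero (a j) (hre j)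
    have := hreal v hvY (fun j => by simp [v]) hv
    have := hreal (-v) (Y.neg_mem hvY) (fun j => by simp [v]) (neg_ne_zero.2 hv)
    linarith
  · calc 0 < l1NormSubDeriv a u := hreal u (re_mem_of_star_mem hY hz) (fun j => by simp [u]) hu
      _ ≤ l1NormSubDeriv a z :=
        Finset.sum_le_sum fun j _ => normSubDeriv_re_le (a j) (z j)

theorem exists_pos_sum_abs_add_mul_le {Y : Submodule ℂ (ι → ℂ)} (hY : ∀ z ∈ Y, star z ∈ Y)
    (hmin : ∀ w ∈ Y, w ≠ 0 → ∑ j, |a j| < ∑ j, ‖(a j : ℂ) - w j‖) :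
    ∃ r > 0, ∀ w ∈ Y, ∑ j, |a j| + r * ∑ j, ‖w j‖ ≤ ∑ j, ‖(a j : ℂ) - w j‖ := by
  obtain ⟨r, hr, hle⟩ := exists_pos_mul_norm_le_of_isClosed_cone
    (S := (WithLp.ofLp ⁻¹' (Y : Set (ι → ℂ)) : Set (PiLp 1 fun _ : ι => ℂ)))
    ((Y.restrictScalars ℝ).closed_of_finiteDimensional.preimage (PiLp.continuous_ofLp 1 _))
    (fun c _ z hz => by simpa using Y.smul_of_tower_mem c hz)
    ((continuous_l1NormSubDeriv a).comp (PiLp.continuous_ofLp 1 _))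
    (fun c hc z => by simpa using l1NormSubDeriv_smul a hc z.ofLp)
    (fun z hz hz0 => l1NormSubDeriv_pos a hY hmin hz (by simpa using hz0))
  refine ⟨r, hr, fun w hw => ?_⟩
  have := hle (WithLp.toLp 1 w) hw
  simp only [PiLp.norm_eq_of_L1, Function.comp_apply] at this
  linarith [sum_abs_add_l1NormSubDeriv_le a w]

theorem stmt15_general (n : ℕ) (Y : Submodule ℂ (Fin n → ℂ))
    (hreal : ∃ (k : ℕ) (b : Module.Basis (Fin k) ℂ Y), ∀ i j, ((b i : Fin n → ℂ) j).im = 0)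
    (x : Fin n → ℂ) (hxreal : ∀ j, (x j).im = 0)
    (y₀ : Fin n → ℂ) (hy₀ : y₀ ∈ Y)
    (huniq : ∀ y ∈ Y, y ≠ y₀ →
      (∑ j, ‖(x - y) j‖) > ∑ j, ‖(x - y₀) j‖) :
    (∀ j, (y₀ j).im = 0) ∧
    ∃ r > 0, ∀ y ∈ Y,
      (∑ j, ‖(x - y) j‖) ≥
        (∑ j, ‖(x - y₀) j‖) + r * ∑ j, ‖(y - y₀) j‖ := by
  obtain ⟨k, b, hb⟩ := hreal
  have hY : ∀ z ∈ Y, star z ∈ Y := fun z => Y.star_mem_of_basis_im_eq_zero b hb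
  have hx : star x = x := funext fun j => Complex.conj_eq_iff_im.2 (hxreal j)
  have hy₀real : star y₀ = y₀ := star_eq_self_of_unique_best hY hx hy₀ huniq
  refine ⟨fun j => Complex.conj_eq_iff_im.1 (congrFun hy₀real j), ?_⟩
  set a : Fin n → ℝ := fun j => ((x - y₀) j).re
  have ha : ∀ j, (a j : ℂ) = (x - y₀) j := fun j =>
    Complex.conj_eq_iff_re.1 (congrFun (by rw [star_sub, hx, hy₀real] : star (x - y₀) = x - y₀) j)
  have hshift : ∀ w, ∑ j, ‖(a j : ℂ) - w j‖ = ∑ j, ‖(x - (y₀ + w)) j‖ := fun w => by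
    simp only [ha, Pi.sub_apply, Pi.add_apply, sub_sub]
  have hbase : ∑ j, |a j| = ∑ j, ‖(x - y₀) j‖ := by
    simp only [← ha, Complex.norm_real, Real.norm_eq_abs]
  obtain ⟨r, hr, hstrong⟩ := exists_pos_sum_abs_add_mul_le a hY fun w hw hw0 => by
    rw [hbase, hshift]
    exact huniq _ (Y.add_mem hy₀ hw) (by simpa using hw0)
  refine ⟨r, hr, fun y hy => ?_⟩
  have := hstrong _ (Y.sub_mem hy hy₀)
  rwa [hbase, hshift, add_sub_cancel] at this

theorem stmt15 (n : ℕ) (Y : Submodule ℂ (Fin n → ℂ))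
    (hreal : ∃ (k : ℕ) (b : Module.Basis (Fin k) ℂ Y), ∀ i j, ((b i : Fin n → ℂ) j).im = 0)
    (x : Fin n → ℂ) (hxreal : ∀ j, (x j).im = 0) (hx : x ∉ Y)
    (y₀ : Fin n → ℂ) (hy₀ : y₀ ∈ Y)
    (huniq : ∀ y ∈ Y, y ≠ y₀ →
      (∑ j, ‖(x - y) j‖) > ∑ j, ‖(x - y₀) j‖) :
    (∀ j, (y₀ j).im = 0) ∧
    ∃ r > 0, ∀ y ∈ Y,
      (∑ j, ‖(x - y) j‖) ≥
        (∑ j, ‖(x - y₀) j‖) + r * ∑ j, ‖(y - y₀) j‖ :=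
  stmt15_general n Y hreal x hxreal y₀ hy₀ huniq
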